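/- arXiv:2308.09344 — 4 statements merged into one kernel-verified Lean document; each statement's English description precedes it below -/
import Mathlib

section
/- If x is sorted by the (132,321)-machine, then x avoids the bivincular pattern 132*, i.e., x contains no indices i < j with x_i < x_{j+1} and x_j = x_{j+1} + 1. -/
/-- `isoOrd p q` : `q` is order-isomorphic to `p`. -/
def isoOrd (p q : List ℕ) : Bool :=
  (p.length == q.length) &&
    (List.range p.length).all fun i =>
      (List.range p.length).all fun j =>
        decide ((p.getD i 0 < p.getD j 0) ↔ (q.getD i 0 < q.getD j 0))

/-- `containsPat p w` : the word `w` contains an occurrence of the classical pattern `p`. -/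
def containsPat (p w : List ℕ) : Bool :=
  (w.sublistsLen p.length).any (isoOrd p)

/-- Pop phase of the right-greedy `T`-avoiding stack: with next input `a`,
pop entries from the top of the stack while pushing `a` would create a pattern of `T`
(read from top to bottom).  Returns the remaining stack and the popped entries in output order. -/
def popPhase (T : List (List ℕ)) (a : ℕ) : List ℕ → List ℕ × List ℕ
  | [] => ([], [])
  | b :: s =>
    if T.any (fun p => containsPat p (a :: b :: s)) then
      let r := popPhase T a s
      (r.1, b :: r.2)
    else (b :: s, [])

/-- Main loop of the right-greedy `T`-avoiding stack map. -/
def stkAux (T : List (List ℕ)) : List ℕ → List ℕ → List ℕ → List ℕ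
  | [], stack, out => out ++ stack
  | a :: rest, stack, out =>
    let r := popPhase T a stack
    stkAux T rest (a :: r.1) (out ++ r.2)

/-- The generalized stack-sorting map `s_T` : the input is pushed right-greedily through a
stack which must avoid (read from top to bottom) every pattern in `T`. -/
def sT (T : List (List ℕ)) (x : List ℕ) : List ℕ := stkAux T x [] []

/-- West's stack-sorting map: the stack must be increasing from top to bottom,
i.e. must avoid `21` read from top to bottom. -/
def westSort (x : List ℕ) : List ℕ := sT [[2,1]] x

/-- `x` is a permutation of `{1,…,n}`, written as a list. -/
def IsPermList (n : ℕ) (x : List ℕ) : Prop := x.Perm (List.range' 1 n)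

/-- The identity permutation `1 2 … n`. -/
def idPerm (n : ℕ) : List ℕ := List.range' 1 n

/-- `x` contains the bivincular pattern `132*` : positions `i < j` (0-based) with
`x i < x (j+1)` and `x j = x (j+1) + 1`. -/
def Has132Star (x : List ℕ) : Prop :=
  ∃ i j, i < j ∧ j + 1 < x.length ∧ x.getD i 0 < x.getD (j+1) 0 ∧
    x.getD j 0 = x.getD (j+1) 0 + 1

/-- `x` contains the bivincular pattern `123*` : positions `i < j` (0-based) with
`x i < x j` and `x (j+1) = x j + 1`. -/
def Has123Star (x : List ℕ) : Prop :=
  ∃ i j, i < j ∧ j + 1 < x.length ∧ x.getD i 0 < x.getD j 0 ∧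
    x.getD (j+1) 0 = x.getD j 0 + 1

/-- Boolean version of `Has132Star`. -/
def has132star (x : List ℕ) : Bool :=
  (List.range x.length).any fun j =>
    decide (j + 1 < x.length) && (x.getD j 0 == x.getD (j+1) 0 + 1) &&
      (List.range j).any fun i => decide (x.getD i 0 < x.getD (j+1) 0)

/-- Boolean version of `Has123Star`. -/
def has123star (x : List ℕ) : Bool :=
  (List.range x.length).any fun j =>
    decide (j + 1 < x.length) && (x.getD (j+1) 0 == x.getD j 0 + 1) &&
      (List.range j).any fun i => decide (x.getD i 0 < x.getD j 0)

/-!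
The stack of the `(132,321)`-machine never holds a `132` or a `321`, read from top to bottom.
Let `a … (b+1) b` with `a < b` be an occurrence of `132*`. Once `a` is pushed, the stack holds an
entry `e < b`. When a later `d > e` is pushed, either `e` stays, or the pop phase outputs some `u`
and stops above some `v < u < d`, so that `u, d, v` is a `231` in the output. If an entry `e < b`
is still in the stack after `b + 1` is pushed, then `b` goes directly onto `b + 1` (a `132` or
`321` starting at `b` would give one starting at `b + 1`), and `b, b + 1, e` leave in this order.
Either way `s_{132,321}(x)` contains `231`, which West's stack sort cannot sort: the `2` is output
before the `3` is pushed, hence before the `1`.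
-/

open List

def Has231 (l : List ℕ) : Prop := ∃ a b c, [a, b, c] <+ l ∧ c < a ∧ a < b

section StackMachine

variable (T : List (List ℕ))

theorem popPhase_cons_of_any {a b : ℕ} {s : List ℕ}
    (h : (T.any fun p => containsPat p (a :: b :: s)) = true) :
    popPhase T a (b :: s) = ((popPhase T a s).1, b :: (popPhase T a s).2) := by
  simp [popPhase, h]

theorem popPhase_of_not_any {a : ℕ} {s : List ℕ}
    (h : (T.any fun p => containsPat p (a :: s)) = false) : popPhase T a s = (s, []) := by
  cases s <;> simp_all [popPhase]

theorem popPhase_snd_append_fst (a : ℕ) (s : List ℕ) :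
    (popPhase T a s).2 ++ (popPhase T a s).1 = s := by
  induction s with
  | nil => rfl
  | cons b s ih =>
    by_cases h : (T.any fun p => containsPat p (a :: b :: s)) = true
    · simpa [popPhase_cons_of_any T h] using ih
    · simp [popPhase_of_not_any T (Bool.eq_false_iff.mpr h)]

theorem popPhase_fst_sublist (a : ℕ) (s : List ℕ) : (popPhase T a s).1 <+ s := by
  conv_rhs => rw [← popPhase_snd_append_fst T a s]
  exact sublist_append_right _ _

theorem any_containsPat_cons_popPhase_fst_eq_false (hT : ∀ p ∈ T, 1 < p.length) (a : ℕ)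
    (s : List ℕ) :
    (T.any fun p => containsPat p (a :: (popPhase T a s).1)) = false := by
  induction s with
  | nil =>
    simpa [popPhase, containsPat] using fun p hp => by have := hT p hp; omega
  | cons b s ih =>
    by_cases h : (T.any fun p => containsPat p (a :: b :: s)) = true
    · rwa [popPhase_cons_of_any T h]
    · rwa [popPhase_of_not_any T (Bool.eq_false_iff.mpr h), Bool.eq_false_iff]

theorem stkAux_cons (a : ℕ) (rest stack out : List ℕ) :
    stkAux T (a :: rest) stack out
      = stkAux T rest (a :: (popPhase T a stack).1) (out ++ (popPhase T a stack).2) := rfl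

theorem stkAux_eq_append (rest stack out : List ℕ) :
    ∃ w, stkAux T rest stack out = out ++ w ∧ stack <+ w ∧ w ~ stack ++ rest := by
  induction rest generalizing stack out with
  | nil => exact ⟨stack, rfl, .refl _, by simp⟩
  | cons a rest ih =>
    obtain ⟨w, hw, hsub, hperm⟩ := ih (a :: (popPhase T a stack).1) (out ++ (popPhase T a stack).2)
    refine ⟨(popPhase T a stack).2 ++ w, by rw [stkAux_cons, hw, append_assoc], ?_, ?_⟩
    · conv_lhs => rw [← popPhase_snd_append_fst T a stack]
      exact (Sublist.refl _).append ((sublist_cons_self a _).trans hsub)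
    · conv_rhs => rw [← popPhase_snd_append_fst T a stack]
      calc (popPhase T a stack).2 ++ w
          ~ (popPhase T a stack).2 ++ a :: ((popPhase T a stack).1 ++ rest) :=
            hperm.append_left _
        _ ~ (popPhase T a stack).2 ++ (popPhase T a stack).1 ++ a :: rest := by
            rw [append_assoc]; exact perm_middle.symm.append_left _

theorem exists_stkAux_append (pre stack out : List ℕ) :
    ∃ stack' out', (∀ rest, stkAux T (pre ++ rest) stack out = stkAux T rest stack' out') ∧
      out' ++ stack' ~ out ++ stack ++ pre := by
  suffices ∃ stack' out', ∀ rest, stkAux T (pre ++ rest) stack out = stkAux T rest stack' out' by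
    obtain ⟨stack', out', hrun⟩ := this
    obtain ⟨w, hw, -, hperm⟩ := stkAux_eq_append T pre stack out
    refine ⟨stack', out', hrun, ?_⟩
    have : out' ++ stack' = out ++ w := by rw [← hw, ← append_nil pre, hrun]; rfl
    rw [this, append_assoc]
    exact hperm.append_left out
  induction pre generalizing stack out with
  | nil => exact ⟨stack, out, fun _ => rfl⟩
  | cons a pre ih => exact ih _ _

theorem sublist_stkAux_of_sublist {l stack : List ℕ} (h : l <+ stack) (rest out : List ℕ) :
    l <+ stkAux T rest stack out := by
  obtain ⟨w, hw, hsub, -⟩ := stkAux_eq_append T rest stack out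
  exact hw ▸ (h.trans hsub).trans (sublist_append_right out w)

def Pops231 (d : ℕ) (s : List ℕ) : Prop :=
  ∃ u ∈ (popPhase T d s).2, ∃ v ∈ (popPhase T d s).1, v < u ∧ u < d

variable {T}

theorem Pops231.cons {d t : ℕ} {s : List ℕ}
    (h : (T.any fun p => containsPat p (d :: t :: s)) = true) (hs : Pops231 T d s) :
    Pops231 T d (t :: s) := by
  obtain ⟨u, hu, v, hv, hvu, hud⟩ := hs
  rw [Pops231, popPhase_cons_of_any T h]
  exact ⟨u, mem_cons_of_mem t hu, v, hv, hvu, hud⟩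

theorem Pops231.has231_stkAux {d : ℕ} {s : List ℕ} (h : Pops231 T d s) (rest out : List ℕ) :
    Has231 (stkAux T (d :: rest) s out) := by
  obtain ⟨u, hu, v, hv, hvu, hud⟩ := h
  obtain ⟨w, hw, hsub, -⟩ :=
    stkAux_eq_append T rest (d :: (popPhase T d s).1) (out ++ (popPhase T d s).2)
  rw [stkAux_cons, hw]
  exact ⟨u, d, v, (singleton_sublist.mpr (mem_append_right out hu)).append
    ((cons_sublist_cons.mpr (singleton_sublist.mpr hv)).trans hsub), hvu, hud⟩

end StackMachine

def Is132Or321 (a b c : ℕ) : Prop := (a < c ∧ c < b) ∨ (c < b ∧ b < a)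

def Avoids132321 (l : List ℕ) : Prop := ∀ a b c, [a, b, c] <+ l → ¬ Is132Or321 a b c

theorem any_containsPat_132_321_iff (w : List ℕ) :
    ([[1,3,2],[3,2,1]].any fun p => containsPat p w) = true ↔
      ∃ a b c, [a, b, c] <+ w ∧ Is132Or321 a b c := by
  simp [containsPat, mem_sublistsLen, length_eq_three, isoOrd, Is132Or321,
    show List.range 3 = [0,1,2] from rfl]
  constructor
  · rintro (⟨a, b, c, h, _⟩ | ⟨a, b, c, h, _⟩) <;> exact ⟨a, b, c, h, by omega⟩
  · rintro ⟨a, b, c, h, _ | _⟩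
    exacts [.inl ⟨a, b, c, h, by omega⟩, .inr ⟨a, b, c, h, by omega⟩]

theorem any_containsPat_132_321_eq_false_iff (w : List ℕ) :
    ([[1,3,2],[3,2,1]].any fun p => containsPat p w) = false ↔ Avoids132321 w := by
  rw [← Bool.not_eq_true, any_containsPat_132_321_iff]
  simp [Avoids132321]

theorem Avoids132321.sublist {l l' : List ℕ} (h : Avoids132321 l) (hl : l' <+ l) :
    Avoids132321 l' :=
  fun a b c hs => h a b c (hs.trans hl)

theorem avoids132321_cons_popPhase_fst (a : ℕ) (s : List ℕ) :
    Avoids132321 (a :: (popPhase [[1,3,2],[3,2,1]] a s).1) :=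
  (any_containsPat_132_321_eq_false_iff _).mp
    (any_containsPat_cons_popPhase_fst_eq_false _ (by simp) a s)

theorem Avoids132321.head_eq_of_sublist_cons {d a b c : ℕ} {s : List ℕ} (hs : Avoids132321 s)
    (h : [a, b, c] <+ d :: s) (hp : Is132Or321 a b c) : a = d ∧ [b, c] <+ s := by
  cases h with
  | cons _ h => exact absurd hp (hs a b c h)
  | cons_cons _ h => exact ⟨rfl, h⟩

theorem Avoids132321.pops231_of_sublist {s : List ℕ} (hs : Avoids132321 s) {d u v : ℕ}
    (huv : [u, v] <+ s) (hvu : v < u) (hud : u < d) : Pops231 [[1,3,2],[3,2,1]] d s := by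
  induction s generalizing u v with
  | nil => simp at huv
  | cons t s ih =>
    have hs' := hs.sublist (sublist_cons_self t s)
    have hpop : ([[1,3,2],[3,2,1]].any fun p => containsPat p (d :: t :: s)) = true :=
      (any_containsPat_132_321_iff _).mpr ⟨d, u, v, huv.cons_cons d, .inr ⟨hvu, hud⟩⟩
    cases huv with
    | cons _ huv => exact (ih hs' huv hvu hud).cons hpop
    | cons_cons _ hv =>
      by_cases hrest : ([[1,3,2],[3,2,1]].any fun p => containsPat p (d :: s)) = true
      · obtain ⟨a, b, c, habc, hp⟩ := (any_containsPat_132_321_iff _).mp hrest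
        obtain ⟨rfl, hbc⟩ := hs'.head_eq_of_sublist_cons habc hp
        rcases hp with ⟨h1, h2⟩ | ⟨h1, h2⟩
        · exact absurd (.inl ⟨by omega, h2⟩) (hs t b c (hbc.cons_cons t))
        · exact (ih hs' hbc h1 h2).cons hpop
      · have hq : popPhase [[1,3,2],[3,2,1]] d (t :: s) = (s, [t]) := by
          rw [popPhase_cons_of_any _ hpop, popPhase_of_not_any _ (Bool.eq_false_iff.mpr hrest)]
        exact ⟨t, by simp [hq], v, by simpa [hq] using hv, hvu, hud⟩

theorem Avoids132321.mem_popPhase_fst_or_pops231 {s : List ℕ} (hs : Avoids132321 s) {d e : ℕ}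
    (he : e ∈ s) (hed : e < d) :
    e ∈ (popPhase [[1,3,2],[3,2,1]] d s).1 ∨ Pops231 [[1,3,2],[3,2,1]] d s := by
  induction s generalizing e with
  | nil => simp at he
  | cons t s ih =>
    have hs' := hs.sublist (sublist_cons_self t s)
    by_cases hpop : ([[1,3,2],[3,2,1]].any fun p => containsPat p (d :: t :: s)) = true
    swap
    · rw [popPhase_of_not_any _ (Bool.eq_false_iff.mpr hpop)]
      exact .inl he
    rcases mem_cons.mp he with rfl | he'
    swap
    · rcases ih hs' he' hed with h | h
      · rw [popPhase_cons_of_any _ hpop]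
        exact .inl h
      · exact .inr (h.cons hpop)
    obtain ⟨a, b, c, habc, hp⟩ := (any_containsPat_132_321_iff _).mp hpop
    obtain ⟨rfl, hbc⟩ := hs.head_eq_of_sublist_cons habc hp
    rcases hp with ⟨h1, h2⟩ | ⟨h1, h2⟩
    · have hbc' : [b, c] <+ s := by
        cases hbc with
        | cons _ h => exact h
        | cons_cons _ h => omega
      exact absurd (.inl ⟨by omega, h2⟩) (hs e b c (hbc'.cons_cons e))
    · cases hbc with
      | cons _ hbc => exact .inr ((hs'.pops231_of_sublist hbc h1 h2).cons hpop)
      | cons_cons _ hc =>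
        rcases ih hs' (singleton_sublist.mp hc) (by omega) with h | h
        · exact .inr ⟨e, by simp [popPhase_cons_of_any _ hpop], c,
            by simpa [popPhase_cons_of_any _ hpop] using h, h1, hed⟩
        · exact .inr (h.cons hpop)

theorem popPhase_132_321_succ_cons {b : ℕ} {s : List ℕ} (hs : Avoids132321 ((b + 1) :: s))
    (hb : b + 1 ∉ s) : popPhase [[1,3,2],[3,2,1]] b ((b + 1) :: s) = ((b + 1) :: s, []) := by
  refine popPhase_of_not_any _ ((any_containsPat_132_321_eq_false_iff _).mpr ?_)
  intro u v w h hp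
  obtain ⟨hu, hvw⟩ := hs.head_eq_of_sublist_cons h hp
  cases hvw with
  | cons_cons _ hw => rcases hp with ⟨h1, h2⟩ | ⟨h1, h2⟩ <;> omega
  | cons _ hvw =>
    have hw : w ≠ b + 1 := fun h => hb (h ▸ hvw.subset (by simp))
    refine hs (b + 1) v w (hvw.cons_cons _) ?_
    rcases hp with ⟨h1, h2⟩ | ⟨h1, h2⟩
    exacts [.inl ⟨by omega, h2⟩, .inr ⟨h1, by omega⟩]

theorem Avoids132321.has231_stkAux {b : ℕ} (post mid : List ℕ) {stack : List ℕ}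
    (hs : Avoids132321 stack) (hb : b + 1 ∉ mid ++ stack) {e : ℕ} (he : e ∈ stack) (heb : e < b)
    (out : List ℕ) :
    Has231 (stkAux [[1,3,2],[3,2,1]] (mid ++ (b + 1) :: b :: post) stack out) := by
  induction mid generalizing stack e out with
  | nil =>
    rcases hs.mem_popPhase_fst_or_pops231 he (heb.trans (lt_add_one b)) with hin | hpops
    · have hb' : b + 1 ∉ (popPhase [[1,3,2],[3,2,1]] (b + 1) stack).1 :=
        fun h => hb (by simpa using (popPhase_fst_sublist _ _ _).subset h)
      rw [nil_append, stkAux_cons, stkAux_cons,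
        popPhase_132_321_succ_cons (avoids132321_cons_popPhase_fst _ _) hb']
      refine ⟨b, b + 1, e, sublist_stkAux_of_sublist _ ?_ _ _, heb, lt_add_one b⟩
      simpa using hin
    · exact hpops.has231_stkAux _ _
  | cons d mid ih =>
    have hb' : b + 1 ∉ mid ++ d :: (popPhase [[1,3,2],[3,2,1]] d stack).1 := by
      have := (popPhase_fst_sublist [[1,3,2],[3,2,1]] d stack).subset
      grind
    rw [cons_append]
    by_cases hdb : d < b
    · rw [stkAux_cons]
      exact ih (avoids132321_cons_popPhase_fst d stack) hb' mem_cons_self hdb _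
    · rcases hs.mem_popPhase_fst_or_pops231 (d := d) he (by omega) with hin | hpops
      · rw [stkAux_cons]
        exact ih (avoids132321_cons_popPhase_fst d stack) hb' (mem_cons_of_mem d hin) heb _
      · exact hpops.has231_stkAux _ _

theorem any_containsPat_21_eq_false_iff (w : List ℕ) :
    ([[2,1]].any fun p => containsPat p w) = false ↔ w.Pairwise (· ≤ ·) := by
  rw [← Bool.not_eq_true, pairwise_iff_forall_sublist]
  simp [containsPat, mem_sublistsLen, length_eq_two, isoOrd, show List.range 2 = [0,1] from rfl]
  exact ⟨fun h a b hab => (le_total a b).elim id (h a b hab), fun h a b hab _ => h hab⟩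

theorem Has231.exists_eq_append_cons {l : List ℕ} (h : Has231 l) :
    ∃ l₁ a b c l₂, l = l₁ ++ b :: l₂ ∧ a ∈ l₁ ∧ c ∈ l₂ ∧ c < a ∧ a < b := by
  obtain ⟨a, b, c, habc, hca, hab⟩ := h
  obtain ⟨l₁, r, rfl, ha, hbc⟩ := cons_sublist_iff.mp habc
  obtain ⟨r₁, r₂, rfl, hb, hc⟩ := cons_sublist_iff.mp hbc
  obtain ⟨s, t, rfl⟩ := append_of_mem hb
  exact ⟨l₁ ++ s, a, b, c, t ++ r₂, by simp, by simp [ha],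
    mem_append_right t (singleton_sublist.mp hc), hca, hab⟩

theorem not_pairwise_westSort_of_has231 {l : List ℕ} (h : Has231 l) :
    ¬ (westSort l).Pairwise (· ≤ ·) := by
  obtain ⟨pre, a, b, c, post, rfl, ha, hc, hca, hab⟩ := h.exists_eq_append_cons
  obtain ⟨stack, out, hrun, hperm⟩ := exists_stkAux_append [[2,1]] pre [] []
  have hsorted := (any_containsPat_21_eq_false_iff _).mp
    (any_containsPat_cons_popPhase_fst_eq_false [[2,1]] (by simp) b stack)
  have ha' : a ∈ out ++ (popPhase [[2,1]] b stack).2 := by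
    have hmem : a ∈ out ++ ((popPhase [[2,1]] b stack).2 ++ (popPhase [[2,1]] b stack).1) := by
      simpa [popPhase_snd_append_fst, hperm.mem_iff] using ha
    have hstays : a ∉ (popPhase [[2,1]] b stack).1 := fun h =>
      absurd (rel_of_pairwise_cons hsorted h) (not_le.mpr hab)
    simpa [hstays] using hmem
  obtain ⟨w, hw, -, hwperm⟩ := stkAux_eq_append [[2,1]] post
    (b :: (popPhase [[2,1]] b stack).1) (out ++ (popPhase [[2,1]] b stack).2)
  rw [westSort, sT, hrun, stkAux_cons, hw, pairwise_iff_forall_sublist]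
  intro hsort
  have := @hsort a c ((singleton_sublist.mpr ha').append (singleton_sublist.mpr
    (hwperm.mem_iff.mpr (by simp [hc]))))
  omega

theorem Has132Star.exists_eq_append {x : List ℕ} (h : Has132Star x) :
    ∃ pre a mid b post, x = pre ++ a :: (mid ++ (b + 1) :: b :: post) ∧ a < b := by
  obtain ⟨i, j, hij, hj, hlt, heq⟩ := h
  rw [getD_eq_getElem _ _ (by omega), getD_eq_getElem _ _ hj] at hlt heq
  refine ⟨x.take i, x[i], (x.drop (i + 1)).take (j - (i + 1)), x[j + 1], x.drop (j + 2), ?_, hlt⟩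
  have hmid : (x.drop (i + 1)).drop (j - (i + 1)) = x[j] :: x[j + 1] :: x.drop (j + 2) := by
    rw [drop_drop, show i + 1 + (j - (i + 1)) = j by omega, drop_eq_getElem_cons (by omega),
      drop_eq_getElem_cons hj]
  rw [← heq, ← hmid, take_append_drop, ← drop_eq_getElem_cons (by omega), take_append_drop]

/-- A `(132,321)`-sortable permutation avoids the bivincular pattern `132*`. -/
theorem sortable_avoids_132star (n : ℕ) (x : List ℕ) (hx : IsPermList n x)
    (hs : westSort (sT [[1,3,2],[3,2,1]] x) = idPerm n) :
    ¬ Has132Star x := by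
  intro h
  obtain ⟨pre, a, mid, b, post, rfl, hab⟩ := h.exists_eq_append
  have hb : b + 1 ∉ pre ++ a :: mid := by
    have hnd := hx.nodup_iff.mpr nodup_range'
    rw [← cons_append, ← append_assoc] at hnd
    exact fun h => disjoint_of_nodup_append hnd h mem_cons_self
  obtain ⟨stack, out, hrun, hperm⟩ := exists_stkAux_append [[1,3,2],[3,2,1]] pre [] []
  have hb' : b + 1 ∉ mid ++ a :: (popPhase [[1,3,2],[3,2,1]] a stack).1 := by
    have := (popPhase_fst_sublist [[1,3,2],[3,2,1]] a stack).subset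
    have := hperm.subset
    grind
  have h231 : Has231 (sT [[1,3,2],[3,2,1]] (pre ++ a :: (mid ++ (b + 1) :: b :: post))) := by
    rw [sT, hrun, stkAux_cons]
    exact (avoids132321_cons_popPhase_fst a stack).has231_stkAux post mid hb' mem_cons_self hab _
  exact not_pairwise_westSort_of_has231 h231 (hs ▸ (pairwise_lt_range' ..).imp le_of_lt)
end

section
/- If x avoids both 132 and the bivincular pattern 123*, then the permutation obtained from x by deleting its maximum entry n also avoids 132 and 123*. -/
/-! Write `x = u ++ n :: v`. Deleting an entry cannot create a `132`. An occurrence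
`a … b (b+1)` of `123*` in `u ++ v` is still one in `x` unless `n` separates `b` from `b+1`,
i.e. `b` ends `u` and `b+1` starts `v`; then either `b + 1 = n`, and `a b n` is a `123*` in `x`,
or `a n (b+1)` is a `132` in `x`. -/

theorem has123Star_iff {x : List ℕ} :
    Has123Star x ↔ ∃ s b t, x = s ++ b :: (b + 1) :: t ∧ ∃ a ∈ s, a < b := by
  constructor
  · rintro ⟨i, j, hij, hj, hlt, hsucc⟩
    rw [List.getD_eq_getElem _ _ (by omega), List.getD_eq_getElem _ _ (by omega)] at hlt
    rw [List.getD_eq_getElem _ _ hj, List.getD_eq_getElem _ _ (by omega)] at hsucc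
    refine ⟨x.take j, x[j], x.drop (j + 2), ?_, x[i], ?_, hlt⟩
    · conv_lhs => rw [← List.take_append_drop j x, List.drop_eq_getElem_cons (by omega),
        List.drop_eq_getElem_cons hj, hsucc]
    · exact List.mem_iff_getElem.2 ⟨i, by rw [List.length_take]; omega, by simp⟩
  · rintro ⟨s, b, t, rfl, a, has, hab⟩
    obtain ⟨i, hi, rfl⟩ := List.mem_iff_getElem.1 has
    refine ⟨i, s.length, hi, by simp, ?_, ?_⟩
    · simp [List.getD_eq_getElem?_getD, List.getElem?_append_left hi, hi, hab]
    · simp [List.getD_eq_getElem?_getD]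

theorem containsPat_of_sublist {p w w' : List ℕ} (hs : w'.Sublist w)
    (h : containsPat p w' = true) : containsPat p w = true := by
  simp only [containsPat, List.any_eq_true, List.mem_sublistsLen] at h ⊢
  obtain ⟨q, ⟨hq, hl⟩, hiso⟩ := h
  exact ⟨q, ⟨hq.trans hs, hl⟩, hiso⟩

theorem containsPat_132_of_sublist {a b c : ℕ} {w : List ℕ} (hs : [a, b, c].Sublist w)
    (hac : a < c) (hcb : c < b) : containsPat [1, 3, 2] w = true := by
  refine containsPat_of_sublist hs ?_
  simp [containsPat, isoOrd, List.range_succ]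
  omega

theorem has123Star_insert_or_contains132 {u v : List ℕ} {n : ℕ} (hv : ∀ c ∈ v, c ≤ n)
    (h : Has123Star (u ++ v)) :
    Has123Star (u ++ n :: v) ∨ containsPat [1, 3, 2] (u ++ n :: v) = true := by
  obtain ⟨s, b, t, hst, a, has, hab⟩ := has123Star_iff.1 h
  rcases List.append_eq_append_iff.1 hst with ⟨m, rfl, rfl⟩ | ⟨m, rfl, hm⟩
  · exact .inl <| has123Star_iff.2 ⟨u ++ n :: m, b, t, by simp, a,
      List.mem_append.2 ((List.mem_append.1 has).imp_right (List.mem_cons_of_mem n)), hab⟩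
  rcases m with _ | ⟨b', _ | ⟨b'', m⟩⟩
  · obtain rfl : v = b :: (b + 1) :: t := hm.symm
    exact .inl <| has123Star_iff.2 ⟨s ++ [n], b, t, by simp, a, by simp [has], hab⟩
  · obtain ⟨rfl, rfl⟩ : b = b' ∧ v = (b + 1) :: t := by simpa [eq_comm] using hm
    rcases (hv (b + 1) (by simp)).eq_or_lt with rfl | hlt
    · exact .inl <| has123Star_iff.2 ⟨s, b, (b + 1) :: t, by simp, a, has, hab⟩
    · have hs : [a, n, b + 1].Sublist (s ++ b :: n :: (b + 1) :: t) :=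
        (List.singleton_sublist.2 has).append ((List.sublist_append_left [n, b + 1] t).cons b)
      exact .inr <| containsPat_132_of_sublist (by simpa using hs) (by omega) hlt
  · obtain ⟨rfl, rfl, rfl⟩ : b = b' ∧ b + 1 = b'' ∧ t = m ++ v := by simpa [eq_comm] using hm
    exact .inl <| has123Star_iff.2 ⟨s, b, m ++ n :: v, by simp, a, has, hab⟩

/-- Deleting the maximum entry preserves avoidance of `132` and `123*`. -/
theorem erase_max_avoids' (n : ℕ) (x : List ℕ) (hx : IsPermList n x)
    (h132 : containsPat [1,3,2] x = false) (hstar : ¬ Has123Star x) :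
    containsPat [1,3,2] (x.erase n) = false ∧ ¬ Has123Star (x.erase n) := by
  refine ⟨Bool.eq_false_iff.2 fun h => by
    simp [containsPat_of_sublist List.erase_sublist h] at h132, fun h => ?_⟩
  by_cases hmem : n ∈ x
  swap
  · exact hstar (by rwa [List.erase_of_not_mem hmem] at h)
  obtain ⟨u, v, -, rfl, herase⟩ := List.exists_erase_eq hmem
  have hv : ∀ c ∈ v, c ≤ n := fun c hc => by
    have := List.mem_range'_1.1 (hx.subset (List.mem_append_right u (List.mem_cons_of_mem n hc)))
    omega
  rw [herase] at h
  rcases has123Star_insert_or_contains132 hv h with h' | h'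
  · exact hstar h'
  · simp [h'] at h132
end

section
/- Let x ∈ S_n avoid 123 and not be the decreasing permutation. Then the number of active sites of x with respect to 123 equals the index of the maximum entry among entries x_i with x_i + i ≠ n+1; more precisely, x_{a} = max{x_i : x_i + i ≠ n+1} where a is the number of sites j for which inserting n+1 immediately before position j (or at the end) yields a 123-avoiding permutation. -/
open List

theorem List.insertIdx_eq_take_append_cons_drop {α : Type*} (a : α) :
    ∀ (l : List α) (t : ℕ), t ≤ l.length → l.insertIdx t a = l.take t ++ a :: l.drop t
  | _, 0, _ => rfl
  | [], _ + 1, h => by simp at h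
  | b :: l, t + 1, h => by
    simp [insertIdx_succ_cons, insertIdx_eq_take_append_cons_drop a l t (by simpa using h)]

lemma isoOrd_123_iff (a b c : ℕ) : isoOrd [1,2,3] [a,b,c] = true ↔ a < b ∧ b < c := by
  simp [isoOrd, range_succ]
  omega

def Contains123 (w : List ℕ) : Prop := ∃ a b c, [a, b, c] <+ w ∧ a < b ∧ b < c

lemma containsPat_123_iff (w : List ℕ) : containsPat [1,2,3] w = true ↔ Contains123 w := by
  simp only [containsPat, any_eq_true, mem_sublistsLen]
  constructor
  · rintro ⟨l, ⟨hsub, hlen⟩, hiso⟩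
    match l, hlen with
    | [a,b,c], _ => exact ⟨a, b, c, hsub, (isoOrd_123_iff a b c).1 hiso⟩
  · rintro ⟨a, b, c, hsub, habc⟩
    exact ⟨[a,b,c], ⟨hsub, rfl⟩, (isoOrd_123_iff a b c).2 habc⟩

/-- A new maximum can only play the role of the `3`. -/
lemma contains123_insertIdx_iff {x : List ℕ} {N t : ℕ}
    (h123 : ¬ Contains123 x) (hN : ∀ v ∈ x, v < N) (ht : t ≤ x.length) :
    Contains123 (x.insertIdx t N) ↔ ¬ (x.take t).Pairwise (· ≥ ·) := by
  rw [insertIdx_eq_take_append_cons_drop N x t ht, pairwise_iff_forall_sublist]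
  push Not
  constructor
  · rintro ⟨a, b, c, hsub, hab, hbc⟩
    obtain ⟨s₁, s₂, hs, hs₁, hs₂⟩ := sublist_append_iff.1 hsub
    rcases sublist_cons_iff.1 hs₂ with hs₂ | ⟨r, rfl, hr⟩
    · refine absurd ⟨a, b, c, ?_, hab, hbc⟩ h123
      rw [hs, ← take_append_drop t x]
      exact hs₁.append hs₂
    · have hr : ∀ v ∈ r, v < N := fun v hv => hN v (drop_subset _ _ (hr.subset hv))
      rcases s₁ with _ | ⟨_, _ | ⟨_, _ | ⟨_, _⟩⟩⟩ <;>
        simp only [cons_append, nil_append, cons.injEq, nil_eq, append_eq_nil_iff, reduceCtorEq,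
          and_false] at hs
      · obtain ⟨rfl, rfl⟩ := hs
        have := hr b (by simp); omega
      · obtain ⟨-, rfl, rfl⟩ := hs
        have := hr c (by simp); omega
      · obtain ⟨rfl, rfl, -⟩ := hs
        exact ⟨a, b, hs₁, hab⟩
  · rintro ⟨a, b, hsub, hab⟩
    refine ⟨a, b, N, hsub.append (singleton_sublist.2 mem_cons_self), hab, hN b ?_⟩
    exact take_subset _ _ (hsub.subset (by simp))

lemma exists_first_ascent : ∀ {l : List ℕ}, ¬ l.IsChain (· > ·) →
    ∃ u a b w, l = u ++ a :: b :: w ∧ (u ++ [a]).IsChain (· > ·) ∧ a ≤ b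
  | [], h | [_], h => absurd (by simp) h
  | c :: d :: l, h => by
    by_cases hcd : c ≤ d
    · exact ⟨[], c, d, l, rfl, by simp, hcd⟩
    · obtain ⟨u, a, b, w, hl, hu, hab⟩ :=
        exists_first_ascent fun hl => h (isChain_cons_cons.2 ⟨by omega, hl⟩)
      refine ⟨c :: u, a, b, w, by rw [hl, cons_append], ?_, hab⟩
      rcases u with _ | ⟨e, u⟩ <;> simp only [nil_append, cons_append, cons.injEq] at hl ⊢
      · exact isChain_pair.2 (hl.1 ▸ by omega)
      · exact isChain_cons_cons.2 ⟨hl.1 ▸ by omega, hu⟩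

lemma not_isChain_gt_of_ne_reverse {n : ℕ} {x : List ℕ} (hx : x ~ range' 1 n)
    (hdec : x ≠ (range' 1 n).reverse) : ¬ x.IsChain (· > ·) := fun hchain =>
  hdec <| by
    rw [hx.symm.eq_reverse_of_sortedLE_of_sortedGE (sortedLE_range' 1 n 1)
      (isChain_iff_pairwise.1 hchain).sortedGT.sortedGE, reverse_reverse]

lemma range'_one_eq_append {c n : ℕ} (hc : c ≤ n) :
    range' 1 n = range' 1 c ++ range' (1 + c) (n - c) := by
  rw [range'_append_1, Nat.add_sub_cancel' hc]

lemma countP_range'_lt {c n : ℕ} (hc : c ≤ n) :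
    (range' 1 n).countP (fun v => c < v) = n - c := by
  rw [range'_one_eq_append hc, countP_append, countP_eq_zero.2, countP_eq_length.2] <;>
    simp +contextual [mem_range'_1] <;> omega

lemma countP_range'_le {c n : ℕ} (hc : c ≤ n) : (range' 1 n).countP (fun v => v ≤ c) = c := by
  rw [range'_one_eq_append hc, countP_append, countP_eq_length.2, countP_eq_zero.2] <;>
    simp +contextual [mem_range'_1] <;> omega

lemma countP_lt_add_eq_of_perm_range' {n c : ℕ} {l₁ l₂ : List ℕ}
    (hx : l₁ ++ c :: l₂ ~ range' 1 n) (h₂ : ∀ v ∈ l₂, v ≤ c) :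
    l₁.countP (fun v => c < v) + c = n := by
  have hc : c ≤ n := by have := mem_range'_1.1 (hx.subset (show c ∈ _ by simp)); omega
  have hcount := hx.countP_eq (fun v => c < v)
  rw [countP_range'_lt hc, countP_append, countP_cons_of_neg (by simp),
    (countP_eq_zero (l := l₂)).2 (by simpa using h₂)] at hcount
  omega

lemma foldr_max_eq_of_mem {l : List ℕ} {b : ℕ} (hb : b ∈ l) (h : ∀ y ∈ l, y ≤ b) :
    l.foldr max 0 = b :=
  le_antisymm (max_le_of_forall_le l b h) (le_max_of_le hb le_rfl)

lemma length_filter_active_sites {n K : ℕ} {x : List ℕ} (hlen : x.length = n)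
    (h123 : ¬ Contains123 x) (hN : ∀ v ∈ x, v < n + 1) (hK : K ≤ n + 1)
    (hprefix : ∀ t ≤ n, (x.take t).Pairwise (· ≥ ·) ↔ t < K) :
    ((range' 1 (n+1)).filter fun j =>
      !containsPat [1,2,3] (x.insertIdx (j-1) (n+1))).length = K := by
  rw [← countP_eq_length_filter, ← countP_range'_le hK]
  refine countP_congr fun j hj => ?_
  have hj := mem_range'_1.1 hj
  rw [Bool.not_eq_true', ← Bool.not_eq_true, containsPat_123_iff,
    contains123_insertIdx_iff h123 hN (by omega), not_not, hprefix (j - 1) (by omega)]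
  simp only [decide_eq_true_eq]
  omega

lemma foldr_max_filter_range'_eq {n b : ℕ} (f : ℕ → ℕ) (p₀ : ℕ) (hp₀ : p₀ < n)
    (hb : f p₀ = b) (hb_ne : b + p₀ ≠ n) (hle : ∀ p < n, f p + p ≠ n → f p ≤ b) :
    (((range' 1 n).filter fun i => f (i-1) + i != n + 1).map fun i => f (i-1)).foldr max 0 =
      b := by
  refine foldr_max_eq_of_mem ?_ ?_
  · refine mem_map.2 ⟨p₀ + 1, mem_filter.2 ⟨mem_range'_1.2 (by omega), ?_⟩, by simpa⟩
    simp only [Nat.add_sub_cancel, hb, bne_iff_ne]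
    omega
  · simp only [mem_map, mem_filter, mem_range'_1, bne_iff_ne]
    rintro _ ⟨i, ⟨⟨hi1, hin⟩, hne⟩, rfl⟩
    exact hle (i - 1) (by omega) (by omega)

section FirstAscent

variable {n a b : ℕ} {u w : List ℕ}

lemma le_of_mem_of_first_ascent (h123 : ¬ Contains123 (u ++ a :: b :: w)) (hab : a < b) :
    ∀ c ∈ w, c ≤ b := by
  intro c hc
  by_contra hbc
  have hsub : [a, b, c] <+ u ++ a :: b :: w :=
    ((singleton_sublist.2 hc).cons_cons b |>.cons_cons a).trans (sublist_append_right u _)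
  exact h123 ⟨a, b, c, hsub, hab, by omega⟩

lemma take_pairwise_ge_iff_of_first_ascent (hdesc : (u ++ [a]).Pairwise (· > ·)) (hab : a < b)
    (t : ℕ) :
    ((u ++ a :: b :: w).take t).Pairwise (· ≥ ·) ↔ t < u.length + 2 := by
  constructor
  · intro h
    by_contra! ht
    have hpre := take_prefix_take_left (l := u ++ a :: b :: w) ht
    rw [show (u ++ a :: b :: w).take (u.length + 2) = u ++ [a, b] from
      take_length_add_append 2] at hpre
    have := pairwise_iff_forall_sublist.1 h ((sublist_append_right u _).trans hpre.sublist)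
    omega
  · intro ht
    rw [show u ++ a :: b :: w = (u ++ [a]) ++ b :: w by simp,
      take_append_of_le_length (by simp; omega)]
    exact (hdesc.sublist (take_sublist t _)).imp le_of_lt

lemma le_add_length_of_first_ascent (hx : u ++ a :: b :: w ~ range' 1 n)
    (hw : ∀ c ∈ w, c ≤ b) (hab : a < b) : n ≤ b + u.length := by
  have hcount := countP_lt_add_eq_of_perm_range' (l₁ := u ++ [a]) (by simpa using hx) hw
  rw [countP_append, countP_singleton, if_neg (by simpa using hab.le)] at hcount
  have := countP_le_length (p := fun v => b < v) (l := u)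
  omega

lemma le_of_first_ascent (hx : u ++ a :: b :: w ~ range' 1 n)
    (hdesc : (u ++ [a]).Pairwise (· > ·)) (hab : a < b) (hw : ∀ c ∈ w, c ≤ b)
    {l₁ l₂ : List ℕ} {c : ℕ} (hsplit : u ++ a :: b :: w = l₁ ++ c :: l₂)
    (hne : c + l₁.length ≠ n) : c ≤ b := by
  by_contra! hbc
  rcases append_eq_append_iff.1 hsplit.symm with ⟨_ | ⟨c', s⟩, rfl, hs⟩ | ⟨s, rfl, hs⟩
  · simp only [nil_append, cons.injEq] at hs
    omega
  · simp only [cons_append, cons.injEq] at hs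
    obtain ⟨rfl, rfl⟩ := hs
    rw [append_assoc, cons_append, pairwise_append, pairwise_cons] at hdesc
    obtain ⟨-, ⟨hsc, -⟩, hl₁⟩ := hdesc
    have hcount := countP_lt_add_eq_of_perm_range' (l₂ := s ++ a :: b :: w) (by simpa using hx)
      (by
        simp only [mem_append, mem_cons]
        rintro v (hv | rfl | rfl | hv)
        · exact (hsc v (mem_append_left _ hv)).le
        · exact (hsc v (by simp)).le
        · exact hbc.le
        · exact (hw v hv).trans hbc.le)
    rw [countP_eq_length.2 (by simpa using fun v hv => hl₁ v hv c mem_cons_self)] at hcount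
    omega
  · have : c ∈ a :: b :: w := by rw [hs]; simp
    simp only [mem_cons] at this
    rcases this with rfl | rfl | hcw
    · omega
    · omega
    · exact absurd (hw c hcw) (by omega)

end FirstAscent

/-- For `x ∈ Av_n(123)` not equal to the decreasing permutation, the entry of `x`
at the position (1-based) given by the number of active sites of `x` with respect to `123`
equals `max { x_i : x_i + i ≠ n + 1 }` (`i` 1-based). -/
theorem signature_char (n : ℕ) (x : List ℕ) (hx : IsPermList n x)
    (h123 : containsPat [1,2,3] x = false)
    (hdec : x ≠ (List.range' 1 n).reverse) :
    x.getD
      ((((List.range' 1 (n+1)).filter fun j =>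
          !containsPat [1,2,3] (x.insertIdx (j-1) (n+1))).length) - 1) 0 =
    (((List.range' 1 n).filter fun i => x.getD (i-1) 0 + i != n + 1).map
        fun i => x.getD (i-1) 0).foldr max 0 := by
  replace hx : x ~ range' 1 n := hx
  have hlen : x.length = n := by simpa using hx.length_eq
  have hN : ∀ v ∈ x, v < n + 1 := fun v hv => by have := mem_range'_1.1 (hx.subset hv); omega
  rw [← Bool.not_eq_true, containsPat_123_iff] at h123
  obtain ⟨u, a, b, w, rfl, hchain, hab_le⟩ :=
    exists_first_ascent (not_isChain_gt_of_ne_reverse hx hdec)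
  have hdesc := isChain_iff_pairwise.1 hchain
  have hab : a < b := hab_le.lt_of_ne fun h => by
    subst h
    simpa using (hx.nodup_iff.2 nodup_range').sublist (sublist_append_right u _)
  have hw := le_of_mem_of_first_ascent h123 hab
  have hu : u.length + 2 ≤ n := by simp at hlen; omega
  have hb : (u ++ a :: b :: w).getD (u.length + 1) 0 = b := by simp
  rw [length_filter_active_sites hlen h123 hN (by omega)
    fun t _ => take_pairwise_ge_iff_of_first_ascent hdesc hab t, Nat.add_succ_sub_one, hb]
  symm
  refine foldr_max_filter_range'_eq (fun p => (u ++ a :: b :: w).getD p 0) (u.length + 1)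
    (by omega) hb (by have := le_add_length_of_first_ascent hx hw hab; omega) fun p hp hne => ?_
  have hsplit := (take_append_drop p (u ++ a :: b :: w)).symm
  rw [drop_eq_getElem_cons (by omega)] at hsplit
  rw [getD_eq_getElem _ _ (by omega)] at hne ⊢
  exact le_of_first_ascent hx hdesc hab hw hsplit (by rwa [length_take_of_le (by omega)])
end

section
/- For x ∈ S_n avoiding 132, site i is active with respect to 132 if and only if {x_1, ..., x_{i-1}} = {n-i+2, ..., n}; consequently, the set of active sites Act_1(x;132) equals {i : i-1 ∈ Act_2 ∩ [ind_x(n), n]} ∪ {1}, where Act_2 is the set of active sites of the permutation obtained by deleting n from x. -/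
/-- The set of active sites (1-based) of `w` with respect to `132`. -/
def activeSites132 (w : List ℕ) : Set ℕ :=
  {j | 1 ≤ j ∧ j ≤ w.length + 1 ∧
    containsPat [1,3,2] (w.insertIdx (j-1) (w.length + 1)) = false}

namespace List

variable {α : Type*}

theorem insertIdx_eq_take_append_cons_drop_s12 (a : α) :
    ∀ (l : List α) (k : ℕ), k ≤ l.length → l.insertIdx k a = l.take k ++ a :: l.drop k
  | _, 0, _ => rfl
  | b :: l, k + 1, hk => by
    rw [insertIdx_succ_cons, insertIdx_eq_take_append_cons_drop_s12 a l k (by simpa using hk)]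
    rfl

theorem sublist_append_cons_iff {s l₁ l₂ : List α} {m : α} :
    s <+ l₁ ++ m :: l₂ ↔
      s <+ l₁ ++ l₂ ∨ ∃ s₁ s₂, s = s₁ ++ m :: s₂ ∧ s₁ <+ l₁ ∧ s₂ <+ l₂ := by
  constructor
  · rw [sublist_append_iff]
    rintro ⟨s₁, s₂, rfl, h₁, h₂⟩
    rcases sublist_cons_iff.mp h₂ with h₂ | ⟨t, rfl, ht⟩
    · exact Or.inl (h₁.append h₂)
    · exact Or.inr ⟨s₁, t, rfl, h₁, ht⟩
  · rintro (h | ⟨s₁, s₂, rfl, h₁, h₂⟩)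
    · exact h.trans ((sublist_cons_self m l₂).append_left l₁)
    · exact h₁.append (h₂.cons_cons m)

variable [DecidableEq α]

theorem take_erase_of_idxOf_le {a : α} :
    ∀ {l : List α} {k : ℕ}, l.idxOf a ≤ k → (l.erase a).take k = (l.take (k + 1)).erase a
  | [], _, _ => by simp
  | b :: l, k, h => by
    by_cases hb : b = a
    · subst hb
      simp
    · cases k with
      | zero => simp [idxOf_cons_ne _ hb] at h
      | succ k =>
        rw [idxOf_cons_ne _ hb] at h
        rw [erase_cons_tail (by simpa using hb), take_succ_cons, take_succ_cons,
          erase_cons_tail (by simpa using hb), take_erase_of_idxOf_le (by omega)]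

theorem Nodup.toFinset_erase {l : List α} (hl : l.Nodup) (a : α) :
    (l.erase a).toFinset = l.toFinset.erase a := by
  ext b
  simp only [mem_toFinset, hl.mem_erase_iff, Finset.mem_erase]

theorem toFinset_take_succ_eq_insert_iff {l : List α} (hl : l.Nodup) {a : α} (ha : a ∈ l)
    {s : Finset α} (has : a ∉ s) (k : ℕ) :
    (l.take (k + 1)).toFinset = insert a s ↔
      l.idxOf a ≤ k ∧ ((l.erase a).take k).toFinset = s := by
  have hnd : (l.take (k + 1)).Nodup := hl.sublist (take_sublist _ _)
  constructor
  · intro h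
    have hidx : l.idxOf a ≤ k := by
      rw [← Nat.lt_succ_iff, ← mem_take_iff_idxOf_lt ha, ← mem_toFinset, h]
      exact Finset.mem_insert_self a s
    refine ⟨hidx, ?_⟩
    rw [take_erase_of_idxOf_le hidx, hnd.toFinset_erase, h, Finset.erase_insert has]
  · rintro ⟨hidx, h⟩
    have hmem : a ∈ (l.take (k + 1)).toFinset := by
      rw [mem_toFinset, mem_take_iff_idxOf_lt ha]
      omega
    rw [← h, take_erase_of_idxOf_le hidx, hnd.toFinset_erase, Finset.insert_erase hmem]

theorem toFinset_eq_Icc_iff_forall_le {n : ℕ} {l₁ l₂ : List ℕ} (h : l₁ ++ l₂ ~ range' 1 n) :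
    l₁.toFinset = Finset.Icc (n + 1 - l₁.length) n ↔ ∀ a ∈ l₁, ∀ c ∈ l₂, c ≤ a := by
  have hnd : (l₁ ++ l₂).Nodup := h.nodup_iff.mpr nodup_range'
  have hdisj : l₁.Disjoint l₂ := disjoint_of_nodup_append hnd
  have hmem : ∀ v, v ∈ l₁ ∨ v ∈ l₂ ↔ 1 ≤ v ∧ v ≤ n := fun v => by
    rw [← mem_append, h.mem_iff, mem_range'_1]
    omega
  have hcard : l₁.toFinset.card = l₁.length := toFinset_card_of_nodup hnd.of_append_left
  have hlen : l₁.length ≤ n := by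
    have := h.length_eq
    rw [length_append, length_range'] at this
    omega
  constructor
  · intro hT a ha c hc
    have ha' := Finset.mem_Icc.mp (hT ▸ mem_toFinset.mpr ha)
    have hc' : c ∉ Finset.Icc (n + 1 - l₁.length) n := fun hc' =>
      hdisj (mem_toFinset.mp (hT ▸ hc')) hc
    have := (hmem c).mp (Or.inr hc)
    simp only [Finset.mem_Icc, not_and_or, not_le] at hc'
    omega
  · -- A value `v` of the top block lying in `l₂` would squeeze all of `l₁` into `(v, n]`.
    intro hle
    refine (Finset.eq_of_subset_of_card_le (fun v hv => ?_) (by simp [hcard]; omega)).symm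
    rw [Finset.mem_Icc] at hv
    by_contra hv₁
    have hv₂ : v ∈ l₂ := ((hmem v).mpr (by omega)).resolve_left (by simpa using hv₁)
    have hsub : l₁.toFinset ⊆ Finset.Ioc v n := fun a ha => by
      rw [mem_toFinset] at ha
      have := (hmem a).mp (Or.inl ha)
      have : v ≠ a := fun hva => hdisj ha (hva ▸ hv₂)
      have := hle a ha v hv₂
      rw [Finset.mem_Ioc]
      omega
    have := Finset.card_le_card hsub
    rw [hcard, Nat.card_Ioc] at this
    omega

end List

open List

def Contains132 (w : List ℕ) : Prop :=
  ∃ a b c, [a, b, c] <+ w ∧ a < c ∧ c < b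

theorem isoOrd_132_iff (a b c : ℕ) : isoOrd [1, 3, 2] [a, b, c] = true ↔ a < c ∧ c < b := by
  have h3 : range 3 = [0, 1, 2] := rfl
  simp [isoOrd, h3]
  omega

theorem containsPat_132_eq_false_iff (w : List ℕ) :
    containsPat [1, 3, 2] w = false ↔ ¬ Contains132 w := by
  simp only [containsPat, Contains132, any_eq_false, mem_sublistsLen]
  constructor
  · rintro h ⟨a, b, c, hs, habc⟩
    exact h _ ⟨hs, rfl⟩ ((isoOrd_132_iff a b c).mpr habc)
  · rintro h _ ⟨hs, hlen⟩ hiso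
    obtain ⟨a, b, c, rfl⟩ := length_eq_three.mp hlen
    exact h ⟨a, b, c, hs, (isoOrd_132_iff a b c).mp hiso⟩

theorem Contains132.mono {w w' : List ℕ} (h : w <+ w') (hw : Contains132 w) : Contains132 w' :=
  let ⟨a, b, c, hs, hac, hcb⟩ := hw
  ⟨a, b, c, hs.trans h, hac, hcb⟩

theorem contains132_append_cons_iff {l₁ l₂ : List ℕ} {m : ℕ} (hm : ∀ v ∈ l₁ ++ l₂, v < m) :
    Contains132 (l₁ ++ m :: l₂) ↔ Contains132 (l₁ ++ l₂) ∨ ∃ a ∈ l₁, ∃ c ∈ l₂, a < c := by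
  constructor
  · rintro ⟨a, b, c, hs, hac, hcb⟩
    rcases sublist_append_cons_iff.mp hs with hs | ⟨s₁, s₂, hs, h₁, h₂⟩
    · exact Or.inl ⟨a, b, c, hs, hac, hcb⟩
    · -- `m` exceeds every other entry, so it can only be the `3` of the occurrence.
      right
      rcases s₁ with _ | ⟨a', _ | ⟨b', _ | ⟨c', s₁⟩⟩⟩
      · simp only [nil_append, cons.injEq] at hs
        obtain ⟨rfl, rfl⟩ := hs
        have := hm b (mem_append_right _ (h₂.subset (by simp)))
        omega
      · simp only [cons_append, nil_append, cons.injEq] at hs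
        obtain ⟨rfl, -, rfl⟩ := hs
        exact ⟨a, h₁.subset (by simp), c, h₂.subset (by simp), hac⟩
      · simp only [cons_append, nil_append, cons.injEq] at hs
        obtain ⟨rfl, rfl, rfl, -⟩ := hs
        have := hm b (mem_append_left _ (h₁.subset (by simp)))
        omega
      · simp at hs
  · rintro (h | ⟨a, ha, c, hc, hac⟩)
    · exact h.mono ((sublist_cons_self m l₂).append_left l₁)
    · refine ⟨a, m, c, sublist_append_cons_iff.mpr (Or.inr ⟨[a], [c], rfl, ?_, ?_⟩), hac, ?_⟩
      · exact singleton_sublist.mpr ha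
      · exact singleton_sublist.mpr hc
      · exact hm c (mem_append_right _ hc)

namespace IsPermList

variable {n : ℕ} {x : List ℕ}

theorem length_eq (hx : IsPermList n x) : x.length = n := by
  simpa using Perm.length_eq hx

theorem nodup (hx : IsPermList n x) : x.Nodup :=
  hx.nodup_iff.mpr nodup_range'

theorem erase_max (hx : IsPermList (n + 1) x) : IsPermList n (x.erase (n + 1)) := by
  have hrange : range' 1 (n + 1) = range' 1 n ++ [n + 1] := by
    rw [range'_concat, one_mul, add_comm]
  have := hx.erase (n + 1)
  rwa [hrange, erase_append_right _ (by rw [mem_range'_1]; omega), erase_cons_head,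
    append_nil] at this

end IsPermList

theorem not_contains132_insertIdx_iff {n k : ℕ} {x : List ℕ} (hx : IsPermList n x)
    (h132 : ¬ Contains132 x) (hk : k ≤ n) :
    ¬ Contains132 (x.insertIdx k (n + 1)) ↔ (x.take k).toFinset = Finset.Icc (n + 1 - k) n := by
  have hsplit : x.take k ++ x.drop k ~ range' 1 n := by rwa [take_append_drop]
  have hlt : ∀ v ∈ x.take k ++ x.drop k, v < n + 1 := fun v hv => by
    have := mem_range'_1.mp (hsplit.mem_iff.mp hv)
    omega
  rw [insertIdx_eq_take_append_cons_drop_s12 _ _ _ (hx.length_eq ▸ hk),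
    contains132_append_cons_iff hlt, take_append_drop,
    show n + 1 - k = n + 1 - (x.take k).length by simp [hx.length_eq, hk],
    toFinset_eq_Icc_iff_forall_le hsplit]
  simp [h132]

theorem succ_mem_activeSites132_iff {n : ℕ} {x : List ℕ} (hx : IsPermList n x)
    (h132 : ¬ Contains132 x) (k : ℕ) :
    k + 1 ∈ activeSites132 x ↔ k ≤ n ∧ (x.take k).toFinset = Finset.Icc (n + 1 - k) n := by
  simp only [activeSites132, Set.mem_ofPred_eq, hx.length_eq, add_tsub_cancel_right,
    containsPat_132_eq_false_iff, le_add_iff_nonneg_left, zero_le, true_and, add_le_add_iff_right]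
  exact and_congr_right (not_contains132_insertIdx_iff hx h132)

theorem succ_succ_mem_activeSites132_iff {m : ℕ} {x : List ℕ} (hx : IsPermList (m + 1) x)
    (h132 : ¬ Contains132 x) (k : ℕ) :
    k + 1 + 1 ∈ activeSites132 x ↔
      k + 1 ∈ activeSites132 (x.erase (m + 1)) ∧ x.idxOf (m + 1) ≤ k := by
  have hmax : m + 1 ∈ x := hx.mem_iff.mpr (by rw [mem_range'_1]; omega)
  rw [succ_mem_activeSites132_iff hx h132,
    succ_mem_activeSites132_iff hx.erase_max (fun h => h132 (h.mono erase_sublist)),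
    Nat.add_sub_add_right, ← Finset.insert_Icc_right_eq_Icc_add_one (by omega),
    toFinset_take_succ_eq_insert_iff hx.nodup hmax (by simp)]
  grind

theorem active_sites_132_char_general (n : ℕ) (x : List ℕ) (hx : IsPermList n x)
    (h132 : containsPat [1,3,2] x = false) :
    (∀ i, 1 ≤ i → i ≤ n + 1 →
        (containsPat [1,3,2] (x.insertIdx (i-1) (n+1)) = false ↔
          (x.take (i-1)).toFinset = Finset.Icc (n + 2 - i) n)) ∧
    activeSites132 x =
      {i | 1 ≤ i ∧ (i - 1) ∈ activeSites132 (x.erase n) ∧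
        x.idxOf n + 1 ≤ i - 1 ∧ i - 1 ≤ n} ∪ {1} := by
  rw [containsPat_132_eq_false_iff] at h132
  refine ⟨fun i hi₁ hi₂ => ?_, ?_⟩
  · obtain ⟨k, rfl⟩ : ∃ k, i = k + 1 := ⟨i - 1, by omega⟩
    rw [containsPat_132_eq_false_iff, add_tsub_cancel_right,
      show n + 2 - (k + 1) = n + 1 - k by omega]
    exact not_contains132_insertIdx_iff hx h132 (by omega)
  ext i
  rcases i with _ | _ | k
  · simp [activeSites132]
  · simp [succ_mem_activeSites132_iff hx h132]
  have h132' : ¬ Contains132 (x.erase n) := fun h => h132 (h.mono erase_sublist)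
  simp only [Set.mem_union, Set.mem_ofPred_eq, Set.mem_singleton_iff, Nat.add_sub_cancel]
  cases n with
  | zero => simp [succ_mem_activeSites132_iff hx h132]
  | succ m =>
    rw [succ_succ_mem_activeSites132_iff hx h132, succ_mem_activeSites132_iff hx.erase_max h132']
    grind

/-- For `x ∈ Av_n(132)` : site `i` is active with respect to `132` iff
`{x₁, …, x_{i-1}} = {n-i+2, …, n}` ; consequently
`Act₁(x;132) = {i : i - 1 ∈ Act₂(x;132) ∩ [ind_x(n), n]} ∪ {1}`,
where `Act₂` is the set of active sites of the permutation obtained by deleting `n`. -/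
theorem active_sites_132_char (n : ℕ) (x : List ℕ) (hx : IsPermList n x)
    (hn : 1 ≤ n) (h132 : containsPat [1,3,2] x = false) :
    (∀ i, 1 ≤ i → i ≤ n + 1 →
        (containsPat [1,3,2] (x.insertIdx (i-1) (n+1)) = false ↔
          (x.take (i-1)).toFinset = Finset.Icc (n + 2 - i) n)) ∧
    activeSites132 x =
      {i | 1 ≤ i ∧ (i - 1) ∈ activeSites132 (x.erase n) ∧
        x.idxOf n + 1 ≤ i - 1 ∧ i - 1 ≤ n} ∪ {1} :=
  active_sites_132_char_general n x hx h132
end
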